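/- arXiv:2602.10305 — 6 statements merged into one kernel-verified Lean document; each statement's English description precedes it below -/
import Mathlib

section
/- The causal Bellman operator B defined by (B V)(s) = max_x [ P(x|s)(R(s,x) + γ Σ_{s'} T(s,x,s') V(s')) + (1 - P(x|s))(b + γ max_{s'} V(s')) ] is a γ-contraction on the space of real-valued functions on a finite state space S with the supremum norm, where γ ∈ [0,1), P(·|s) is a probability distribution over a finite action set X, T(s,x,·) is a probability distribution over S, and R, b are real-valued. -/
open Finset

/-- Max of a real-valued function over a nonempty finite type. -/
noncomputable def fmax {A : Type*} [Fintype A] [Nonempty A] (f : A → ℝ) : ℝ :=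
  Finset.univ.sup' Finset.univ_nonempty f

/-- Sup norm on functions on a nonempty finite type. -/
noncomputable def supNorm {S : Type*} [Fintype S] [Nonempty S] (V : S → ℝ) : ℝ :=
  fmax (fun s => |V s|)

/-- The causal Bellman operator. -/
noncomputable def causalB {S X : Type*} [Fintype S] [Nonempty S] [Fintype X] [Nonempty X]
    (P : S → X → ℝ) (R : S → X → ℝ) (T : S → X → S → ℝ) (γ b : ℝ) (V : S → ℝ) : S → ℝ :=
  fun s => fmax (fun x =>
    P s x * (R s x + γ * ∑ s', T s x s' * V s') +
    (1 - P s x) * (b + γ * fmax V))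

lemma fmax_le {A : Type*} [Fintype A] [Nonempty A] {f : A → ℝ} {c : ℝ}
    (h : ∀ a, f a ≤ c) : fmax f ≤ c :=
  Finset.sup'_le _ _ fun a _ => h a

lemma le_fmax {A : Type*} [Fintype A] [Nonempty A] (f : A → ℝ) (a : A) : f a ≤ fmax f :=
  Finset.le_sup' f (Finset.mem_univ a)

lemma abs_fmax_sub_fmax_le {A : Type*} [Fintype A] [Nonempty A] {f g : A → ℝ} {c : ℝ}
    (h : ∀ a, |f a - g a| ≤ c) : |fmax f - fmax g| ≤ c := by
  rw [abs_sub_le_iff]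
  constructor <;> [skip; rw [sub_le_iff_le_add]] <;>
  · first
      | (apply sub_le_iff_le_add.mpr; apply fmax_le; intro a;
         have := (abs_sub_le_iff.mp (h a)).1
         linarith [le_fmax g a])
      | (apply fmax_le; intro a;
         have := (abs_sub_le_iff.mp (h a)).2
         linarith [le_fmax f a])

theorem causalB_contraction {S X : Type*} [Fintype S] [Nonempty S] [Fintype X] [Nonempty X]
    (P R : S → X → ℝ) (T : S → X → S → ℝ) (γ b : ℝ)
    (hγ0 : 0 ≤ γ) (hγ1 : γ < 1)
    (hP0 : ∀ s x, 0 ≤ P s x) (hP1 : ∀ s x, P s x ≤ 1)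
    (hT0 : ∀ s x s', 0 ≤ T s x s') (hT1 : ∀ s x, (∑ s', T s x s') = 1)
    (V₁ V₂ : S → ℝ) :
    supNorm (fun s => causalB P R T γ b V₁ s - causalB P R T γ b V₂ s)
      ≤ γ * supNorm (fun s => V₁ s - V₂ s) := by
  set D := supNorm (fun s => V₁ s - V₂ s) with hD
  have hVD : ∀ s, |V₁ s - V₂ s| ≤ D := fun s => le_fmax (fun s => |V₁ s - V₂ s|) s
  have hfmaxD : |fmax V₁ - fmax V₂| ≤ D := abs_fmax_sub_fmax_le hVD
  apply fmax_le
  intro s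
  apply abs_fmax_sub_fmax_le
  intro x
  have hsum : |(∑ s', T s x s' * V₁ s') - ∑ s', T s x s' * V₂ s'| ≤ D := by
    rw [← Finset.sum_sub_distrib]
    calc |∑ s', (T s x s' * V₁ s' - T s x s' * V₂ s')|
        ≤ ∑ s', |T s x s' * V₁ s' - T s x s' * V₂ s'| := Finset.abs_sum_le_sum_abs _ _
      _ ≤ ∑ s', T s x s' * D := by
          apply Finset.sum_le_sum
          intro s' _
          rw [← mul_sub, abs_mul, abs_of_nonneg (hT0 s x s')]
          exact mul_le_mul_of_nonneg_left (hVD s') (hT0 s x s')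
      _ = D := by rw [← Finset.sum_mul, hT1, one_mul]
  have key : P s x * (R s x + γ * ∑ s', T s x s' * V₁ s') +
      (1 - P s x) * (b + γ * fmax V₁) -
      (P s x * (R s x + γ * ∑ s', T s x s' * V₂ s') +
      (1 - P s x) * (b + γ * fmax V₂)) =
      P s x * (γ * ((∑ s', T s x s' * V₁ s') - ∑ s', T s x s' * V₂ s')) +
      (1 - P s x) * (γ * (fmax V₁ - fmax V₂)) := by ring
  rw [key]
  calc |P s x * (γ * ((∑ s', T s x s' * V₁ s') - ∑ s', T s x s' * V₂ s')) +
        (1 - P s x) * (γ * (fmax V₁ - fmax V₂))|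
      ≤ |P s x * (γ * ((∑ s', T s x s' * V₁ s') - ∑ s', T s x s' * V₂ s'))| +
        |(1 - P s x) * (γ * (fmax V₁ - fmax V₂))| := abs_add_le _ _
    _ ≤ P s x * (γ * D) + (1 - P s x) * (γ * D) := by
        rw [abs_mul, abs_mul, abs_mul, abs_mul,
          abs_of_nonneg (hP0 s x), abs_of_nonneg (by linarith [hP1 s x] : (0:ℝ) ≤ 1 - P s x),
          abs_of_nonneg hγ0]
        gcongr <;> first
          | exact hP0 s x
          | linarith [hP1 s x]
          | exact hsum
          | exact hfmaxD
    _ = γ * D := by ring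
end

section
/- The standard Bellman optimality operator is pointwise dominated by the causal Bellman operator: if rewards satisfy R(s,x) ≤ b and the true value function satisfies V(s) ≤ b/(1−γ) for all s, and the estimated quantities agree with the true ones (R̃ = R, T̃ = T), then (T_opt V)(s) ≤ (B V)(s) for every V with V ≤ b/(1−γ) pointwise, where (T_opt V)(s) = max_x [R(s,x) + γ Σ_{s'} T(s,x,s') V(s')]. -/
open Finset

noncomputable def bellmanOpt {S X : Type*} [Fintype S] [Nonempty S] [Fintype X] [Nonempty X]
    (R : S → X → ℝ) (T : S → X → S → ℝ) (γ : ℝ) (V : S → ℝ) : S → ℝ :=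
  fun s => fmax (fun x => R s x + γ * ∑ s', T s x s' * V s')

theorem bellmanOpt_le_causalB
    {S X : Type*} [Fintype S] [Nonempty S] [Fintype X] [Nonempty X]
    (P R : S → X → ℝ) (T : S → X → S → ℝ) (γ b : ℝ)
    (hγ0 : 0 ≤ γ) (hγ1 : γ < 1)
    (hP0 : ∀ s x, 0 ≤ P s x) (hP1 : ∀ s x, P s x ≤ 1)
    (hT0 : ∀ s x s', 0 ≤ T s x s') (hT1 : ∀ s x, (∑ s', T s x s') = 1)
    (hR : ∀ s x, R s x ≤ b)
    (V : S → ℝ) (hV : ∀ s, V s ≤ b / (1 - γ)) :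
    ∀ s, bellmanOpt R T γ V s ≤ causalB P R T γ b V s := by
  intro s
  simp only [bellmanOpt, causalB, fmax]
  apply Finset.sup'_mono_fun
  intro x _
  set f := R s x + γ * ∑ s', T s x s' * V s' with hf
  have hfb : f ≤ b + γ * fmax V := by
    have hsum : (∑ s', T s x s' * V s') ≤ fmax V := by
      calc (∑ s', T s x s' * V s') ≤ ∑ s', T s x s' * fmax V := by
            apply Finset.sum_le_sum
            intro i _
            exact mul_le_mul_of_nonneg_left
              (Finset.le_sup' V (Finset.mem_univ i)) (hT0 s x i)
        _ = fmax V := by rw [← Finset.sum_mul, hT1]; ring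
    have := hR s x
    have := mul_le_mul_of_nonneg_left hsum hγ0
    linarith
  simp only [fmax] at hfb
  have h1 : 0 ≤ 1 - P s x := by linarith [hP1 s x]
  nlinarith [mul_le_mul_of_nonneg_left hfb h1]
end

section
/- The optimal state value function V* of a finite MDP with rewards bounded above by b satisfies V*(s) ≤ V̄(s) for all s, where V̄ is the unique fixed point of the causal Bellman operator built from the true reward R and transition T. -/
open Finset

theorem optimal_value_le_causal_fixed_point
    {S X : Type*} [Fintype S] [Nonempty S] [Fintype X] [Nonempty X]
    (P R : S → X → ℝ) (T : S → X → S → ℝ) (γ b : ℝ)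
    (hγ0 : 0 ≤ γ) (hγ1 : γ < 1)
    (hP0 : ∀ s x, 0 ≤ P s x) (hP1 : ∀ s x, P s x ≤ 1)
    (hT0 : ∀ s x s', 0 ≤ T s x s') (hT1 : ∀ s x, (∑ s', T s x s') = 1)
    (hR : ∀ s x, R s x ≤ b)
    (Vstar : S → ℝ) (hVstar : bellmanOpt R T γ Vstar = Vstar)
    (Vbar : S → ℝ) (hVbar : causalB P R T γ b Vbar = Vbar) :
    ∀ s, Vstar s ≤ Vbar s := by
  set M : ℝ := fmax (fun s => Vstar s - Vbar s) with hM
  have hdiff : ∀ s, Vstar s - Vbar s ≤ M := by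
    intro s; rw [hM]; exact le_fmax (fun s => Vstar s - Vbar s) s
  -- sum of transition-weighted differences is ≤ M
  have hsum : ∀ s x, (∑ s', T s x s' * Vstar s') - (∑ s', T s x s' * Vbar s') ≤ M := by
    intro s x
    rw [← Finset.sum_sub_distrib]
    calc (∑ s', (T s x s' * Vstar s' - T s x s' * Vbar s'))
        ≤ ∑ s', T s x s' * M := by
          apply Finset.sum_le_sum
          intro s' _
          rw [← mul_sub]
          exact mul_le_mul_of_nonneg_left (hdiff s') (hT0 s x s')
      _ = M := by rw [← Finset.sum_mul, hT1, one_mul]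
  -- fmax Vstar - fmax Vbar ≤ M
  have hfm : fmax Vstar - fmax Vbar ≤ M := by
    rw [sub_le_iff_le_add]
    apply fmax_le
    intro s
    have := hdiff s
    have := le_fmax Vbar s
    linarith
  -- ∑ T V ≤ fmax V
  have hsumle : ∀ (V : S → ℝ) s x, (∑ s', T s x s' * V s') ≤ fmax V := by
    intro V s x
    calc (∑ s', T s x s' * V s') ≤ ∑ s', T s x s' * fmax V := by
          apply Finset.sum_le_sum
          intro s' _
          exact mul_le_mul_of_nonneg_left (le_fmax V s') (hT0 s x s')
      _ = fmax V := by rw [← Finset.sum_mul, hT1, one_mul]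
  have key : M ≤ γ * M := by
    apply fmax_le
    intro s
    have h1 : Vstar s = bellmanOpt R T γ Vstar s := by rw [hVstar]
    have h2 : Vbar s = causalB P R T γ b Vbar s := by rw [hVbar]
    rw [h1, h2, sub_le_iff_le_add]
    unfold bellmanOpt causalB
    apply fmax_le
    intro x
    have hle : R s x + γ * ∑ s', T s x s' * Vstar s' ≤
        P s x * (R s x + γ * ∑ s', T s x s' * Vstar s') +
        (1 - P s x) * (b + γ * fmax Vstar) := by
      have hP : 0 ≤ 1 - P s x := by linarith [hP1 s x]
      have hb : R s x + γ * ∑ s', T s x s' * Vstar s' ≤ b + γ * fmax Vstar := by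
        have := hsumle Vstar s x
        have := hR s x
        nlinarith
      nlinarith
    have hle2 : P s x * (R s x + γ * ∑ s', T s x s' * Vstar s') +
        (1 - P s x) * (b + γ * fmax Vstar) ≤
        (P s x * (R s x + γ * ∑ s', T s x s' * Vbar s') +
        (1 - P s x) * (b + γ * fmax Vbar)) + γ * M := by
      have hP := hP0 s x
      have hP' : 0 ≤ 1 - P s x := by linarith [hP1 s x]
      have h3 := hsum s x
      nlinarith [mul_le_mul_of_nonneg_left h3 (mul_nonneg hP hγ0),
        mul_le_mul_of_nonneg_left hfm (mul_nonneg hP' hγ0)]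
    calc R s x + γ * ∑ s', T s x s' * Vstar s' ≤ _ := hle
      _ ≤ _ := hle2
      _ ≤ γ * M + fmax (fun x => P s x * (R s x + γ * ∑ s', T s x s' * Vbar s') +
            (1 - P s x) * (b + γ * fmax Vbar)) := by
          have h4 : P s x * (R s x + γ * ∑ s', T s x s' * Vbar s') +
              (1 - P s x) * (b + γ * fmax Vbar) ≤
              fmax (fun x => P s x * (R s x + γ * ∑ s', T s x s' * Vbar s') +
              (1 - P s x) * (b + γ * fmax Vbar)) :=
            le_fmax (fun x => P s x * (R s x + γ * ∑ s', T s x s' * Vbar s') +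
              (1 - P s x) * (b + γ * fmax Vbar)) x
          linarith
  have hM0 : M ≤ 0 := by nlinarith
  intro s
  have := hdiff s
  linarith
end

section
/- Potential-based reward shaping preserves policy values up to a state-dependent constant: in a finite MDP, for any stationary policy π and any potential φ : S → ℝ, the value function V'_π of the shaped MDP with reward r'(s,x,s') = r(s,x) + γφ(s') − φ(s) satisfies V'_π(s) = V_π(s) − φ(s) for all states s. -/
open Finset

theorem pbrs_value_shift
    {S X : Type*} [Fintype S] [Nonempty S] [Fintype X] [Nonempty X]
    (γ : ℝ) (hγ0 : 0 ≤ γ) (hγ1 : γ < 1)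
    (r : S → X → ℝ) (T : S → X → S → ℝ)
    (hT0 : ∀ s x s', 0 ≤ T s x s') (hT1 : ∀ s x, (∑ s', T s x s') = 1)
    (π : S → X → ℝ) (hπ0 : ∀ s x, 0 ≤ π s x) (hπ1 : ∀ s, (∑ x, π s x) = 1)
    (φ : S → ℝ) (Vπ V'π : S → ℝ)
    (hV : ∀ s, Vπ s = ∑ x, π s x * (r s x + γ * ∑ s', T s x s' * Vπ s'))
    (hV' : ∀ s, V'π s = ∑ x, π s x *
      ((∑ s', T s x s' * (r s x + γ * φ s' - φ s)) + γ * ∑ s', T s x s' * V'π s')) :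
    ∀ s, V'π s = Vπ s - φ s := by
  set D : S → ℝ := fun s => V'π s - (Vπ s - φ s) with hDdef
  have hD : ∀ s, D s = ∑ x, π s x * (γ * ∑ s', T s x s' * D s') := by
    intro s
    have key : ∀ x : X,
        π s x * ((∑ s', T s x s' * (r s x + γ * φ s' - φ s)) + γ * ∑ s', T s x s' * V'π s')
          - π s x * (r s x + γ * ∑ s', T s x s' * Vπ s') + π s x * φ s
        = π s x * (γ * ∑ s', T s x s' * D s') := by
      intro x
      have h1 : (∑ s', T s x s' * (r s x + γ * φ s' - φ s))
          = r s x - φ s + γ * ∑ s', T s x s' * φ s' := by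
        have : (∑ s', T s x s' * (r s x + γ * φ s' - φ s))
            = (∑ s', T s x s') * (r s x - φ s) + γ * ∑ s', T s x s' * φ s' := by
          rw [Finset.sum_mul, Finset.mul_sum, ← Finset.sum_add_distrib]
          exact Finset.sum_congr rfl fun s' _ => by ring
        rw [this, hT1 s x]; ring
      have h2 : (∑ s', T s x s' * D s')
          = (∑ s', T s x s' * V'π s') - (∑ s', T s x s' * Vπ s')
            + ∑ s', T s x s' * φ s' := by
        rw [← Finset.sum_sub_distrib, ← Finset.sum_add_distrib]
        exact Finset.sum_congr rfl fun s' _ => by simp [hDdef]; ring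
      rw [h1, h2]; ring
    have : D s = ∑ x, (π s x * ((∑ s', T s x s' * (r s x + γ * φ s' - φ s))
          + γ * ∑ s', T s x s' * V'π s')
          - π s x * (r s x + γ * ∑ s', T s x s' * Vπ s') + π s x * φ s) := by
      rw [Finset.sum_add_distrib, Finset.sum_sub_distrib, ← Finset.sum_mul, hπ1 s,
        ← hV s, ← hV' s]
      simp [hDdef]; ring
    rw [this]
    exact Finset.sum_congr rfl fun x _ => key x
  obtain ⟨s0, hs0⟩ := Finite.exists_max (fun s => |D s|)
  have hbound : ∀ s, |D s| ≤ γ * |D s0| := by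
    intro s
    rw [hD s]
    calc |∑ x, π s x * (γ * ∑ s', T s x s' * D s')|
        ≤ ∑ x, |π s x * (γ * ∑ s', T s x s' * D s')| :=
          Finset.abs_sum_le_sum_abs _ _
      _ ≤ ∑ x, π s x * (γ * |D s0|) := by
          apply Finset.sum_le_sum
          intro x _
          rw [abs_mul, abs_mul, abs_of_nonneg (hπ0 s x), abs_of_nonneg hγ0]
          apply mul_le_mul_of_nonneg_left _ (hπ0 s x)
          apply mul_le_mul_of_nonneg_left _ hγ0
          calc |∑ s', T s x s' * D s'| ≤ ∑ s', |T s x s' * D s'| :=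
                Finset.abs_sum_le_sum_abs _ _
            _ ≤ ∑ s', T s x s' * |D s0| := by
                apply Finset.sum_le_sum
                intro s' _
                rw [abs_mul, abs_of_nonneg (hT0 s x s')]
                exact mul_le_mul_of_nonneg_left (hs0 s') (hT0 s x s')
            _ = |D s0| := by rw [← Finset.sum_mul, hT1 s x, one_mul]
      _ = γ * |D s0| := by rw [← Finset.sum_mul, hπ1 s, one_mul]
  have h0 : |D s0| ≤ 0 := by
    have := hbound s0
    nlinarith [abs_nonneg (D s0)]
  intro s
  have : |D s| ≤ 0 := (hbound s).trans (by nlinarith [abs_nonneg (D s0)])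
  have hz : D s = 0 := abs_eq_zero.mp (le_antisymm this (abs_nonneg _))
  have := hz
  simp only [hDdef] at this
  linarith
end

section
/- Potential-based reward shaping preserves optimal policies: in a finite MDP, a stationary policy π is optimal for the shaped MDP with reward r'(s,x,s') = r(s,x) + γφ(s') − φ(s) if and only if it is optimal for the original MDP. -/
open Finset

/-- A stationary policy: a probability distribution over actions at each state. -/
def IsPolicy {S X : Type*} [Fintype X] (π : S → X → ℝ) : Prop :=
  (∀ s x, 0 ≤ π s x) ∧ (∀ s, (∑ x, π s x) = 1)

/-- Uniqueness of the solution to the Bellman evaluation equation. -/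
lemma bellman_unique {S X : Type*} [Fintype S] [Nonempty S] [Fintype X]
    (γ : ℝ) (hγ0 : 0 ≤ γ) (hγ1 : γ < 1)
    (T : S → X → S → ℝ)
    (hT0 : ∀ s x s', 0 ≤ T s x s') (hT1 : ∀ s x, (∑ s', T s x s') = 1)
    (π : S → X → ℝ) (hπ : IsPolicy π)
    (c : S → X → ℝ) (f g : S → ℝ)
    (hf : ∀ s, f s = ∑ x, π s x * (c s x + γ * ∑ s', T s x s' * f s'))
    (hg : ∀ s, g s = ∑ x, π s x * (c s x + γ * ∑ s', T s x s' * g s')) :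
    f = g := by
  obtain ⟨s0, -, hs0⟩ := Finset.exists_max_image Finset.univ (fun s => |f s - g s|)
    Finset.univ_nonempty
  have key : f s0 - g s0 = ∑ x, π s0 x * (γ * ∑ s', T s0 x s' * (f s' - g s')) := by
    rw [hf s0, hg s0, ← Finset.sum_sub_distrib]
    apply Finset.sum_congr rfl
    intro x _
    have : ∑ s', T s0 x s' * (f s' - g s') =
        (∑ s', T s0 x s' * f s') - ∑ s', T s0 x s' * g s' := by
      rw [← Finset.sum_sub_distrib]
      exact Finset.sum_congr rfl fun s' _ => by ring
    rw [this]; ring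
  have hbound : |f s0 - g s0| ≤ γ * |f s0 - g s0| := by
    calc |f s0 - g s0| = |∑ x, π s0 x * (γ * ∑ s', T s0 x s' * (f s' - g s'))| := by
          rw [key]
      _ ≤ ∑ x, |π s0 x * (γ * ∑ s', T s0 x s' * (f s' - g s'))| :=
          Finset.abs_sum_le_sum_abs _ _
      _ ≤ ∑ x, π s0 x * (γ * ∑ s', T s0 x s' * |f s0 - g s0|) := by
          apply Finset.sum_le_sum
          intro x _
          rw [abs_mul, abs_mul, abs_of_nonneg (hπ.1 s0 x), abs_of_nonneg hγ0]
          apply mul_le_mul_of_nonneg_left _ (hπ.1 s0 x)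
          apply mul_le_mul_of_nonneg_left _ hγ0
          calc |∑ s', T s0 x s' * (f s' - g s')| ≤ ∑ s', |T s0 x s' * (f s' - g s')| :=
                Finset.abs_sum_le_sum_abs _ _
            _ ≤ ∑ s', T s0 x s' * |f s0 - g s0| := by
                apply Finset.sum_le_sum
                intro s' _
                rw [abs_mul, abs_of_nonneg (hT0 s0 x s')]
                exact mul_le_mul_of_nonneg_left (hs0 s' (Finset.mem_univ s'))
                  (hT0 s0 x s')
      _ = γ * |f s0 - g s0| := by
          simp only [← Finset.sum_mul, hT1]
          rw [hπ.2]
          ring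
  have hM0 : |f s0 - g s0| = 0 := by
    have := abs_nonneg (f s0 - g s0)
    nlinarith
  funext s
  have hle := hs0 s (Finset.mem_univ s)
  rw [hM0] at hle
  have : |f s - g s| = 0 := le_antisymm hle (abs_nonneg _)
  have := abs_eq_zero.mp this
  linarith [sub_eq_zero.mp this]

theorem pbrs_preserves_optimal_policies
    {S X : Type*} [Fintype S] [Nonempty S] [Fintype X] [Nonempty X]
    (γ : ℝ) (hγ0 : 0 ≤ γ) (hγ1 : γ < 1)
    (r : S → X → ℝ) (T : S → X → S → ℝ)
    (hT0 : ∀ s x s', 0 ≤ T s x s') (hT1 : ∀ s x, (∑ s', T s x s') = 1)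
    (φ : S → ℝ)
    (Vfun V'fun : (S → X → ℝ) → (S → ℝ))
    (hVfun : ∀ π, IsPolicy π → ∀ s,
      Vfun π s = ∑ x, π s x * (r s x + γ * ∑ s', T s x s' * Vfun π s'))
    (hV'fun : ∀ π, IsPolicy π → ∀ s,
      V'fun π s = ∑ x, π s x *
        ((∑ s', T s x s' * (r s x + γ * φ s' - φ s)) + γ * ∑ s', T s x s' * V'fun π s'))
    (π : S → X → ℝ) (hπ : IsPolicy π) :
    (∀ π', IsPolicy π' → ∀ s, V'fun π' s ≤ V'fun π s) ↔
      (∀ π', IsPolicy π' → ∀ s, Vfun π' s ≤ Vfun π s) := by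
  -- key identity: V' π' = V π' - φ for every policy π'
  have hkey : ∀ π', IsPolicy π' → ∀ s, V'fun π' s = Vfun π' s - φ s := by
    intro π' hπ'
    have h := bellman_unique γ hγ0 hγ1 T hT0 hT1 π' hπ'
      (fun s x => ∑ s', T s x s' * (r s x + γ * φ s' - φ s))
      (V'fun π') (fun s => Vfun π' s - φ s)
      (hV'fun π' hπ')
      ?_
    · intro s; exact congrFun h s
    · intro s
      have hstep : ∀ x, (∑ s', T s x s' * (r s x + γ * φ s' - φ s)) +
          γ * ∑ s', T s x s' * (Vfun π' s' - φ s') =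
          (r s x + γ * ∑ s', T s x s' * Vfun π' s') - φ s := by
        intro x
        have e1 : ∑ s', T s x s' * (r s x + γ * φ s' - φ s) =
            (r s x - φ s) * (∑ s', T s x s') + γ * ∑ s', T s x s' * φ s' := by
          simp only [Finset.mul_sum, ← Finset.sum_add_distrib]
          exact Finset.sum_congr rfl fun s' _ => by ring
        have e2 : ∑ s', T s x s' * (Vfun π' s' - φ s') =
            (∑ s', T s x s' * Vfun π' s') - ∑ s', T s x s' * φ s' := by
          rw [← Finset.sum_sub_distrib]
          exact Finset.sum_congr rfl fun s' _ => by ring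
        rw [e1, e2, hT1]
        ring
      calc Vfun π' s - φ s
          = (∑ x, π' s x * (r s x + γ * ∑ s', T s x s' * Vfun π' s'))
            - φ s * (∑ x, π' s x) := by rw [hVfun π' hπ' s, hπ'.2]; ring
        _ = ∑ x, π' s x * ((r s x + γ * ∑ s', T s x s' * Vfun π' s') - φ s) := by
            rw [Finset.mul_sum, ← Finset.sum_sub_distrib]
            exact Finset.sum_congr rfl fun x _ => by ring
        _ = ∑ x, π' s x * ((∑ s', T s x s' * (r s x + γ * φ s' - φ s)) +
              γ * ∑ s', T s x s' * (Vfun π' s' - φ s')) :=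
            Finset.sum_congr rfl fun x _ => by rw [hstep x]
  constructor
  · intro h π' hπ' s
    have := h π' hπ' s
    rw [hkey π' hπ' s, hkey π hπ s] at this
    linarith
  · intro h π' hπ' s
    rw [hkey π' hπ' s, hkey π hπ s]
    linarith [h π' hπ' s]
end

section
/- For a finite-horizon version of the causal Bellman recursion, defined by V̄_{H+1} ≡ 0 and V̄_h(s) = max_x [ P(x|s)(R(s,x) + γ Σ_{s'} T(s,x,s') V̄_{h+1}(s')) + (1 − P(x|s))(b + γ max_{s'} V̄_{h+1}(s')) ], the optimal finite-horizon value V*_h(s) = max over policies of E[Σ_{t=h}^{H} γ^{t−h} r_t | s_h = s] satisfies V*_h(s) ≤ V̄_h(s) for all h ∈ {1,…,H+1} and all s, provided R(s,x) ≤ b for all s, x and V̄_{h+1} is bounded so that R(s,x) + γΣT V̄_{h+1} ≤ b + γ max V̄_{h+1} holds at each step (which follows by backward induction from R ≤ b). -/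
open Finset

theorem finite_horizon_causal_upper_bound
    {S X : Type*} [Fintype S] [Nonempty S] [Fintype X] [Nonempty X]
    (P R : S → X → ℝ) (T : S → X → S → ℝ) (γ b : ℝ)
    (hγ0 : 0 ≤ γ) (hγ1 : γ ≤ 1) (H : ℕ)
    (hP0 : ∀ s x, 0 ≤ P s x) (hP1 : ∀ s x, P s x ≤ 1)
    (hT0 : ∀ s x s', 0 ≤ T s x s') (hT1 : ∀ s x, (∑ s', T s x s') = 1)
    (hR : ∀ s x, R s x ≤ b)
    (Vbar Vstar : ℕ → S → ℝ)
    (hVbarTop : ∀ s, Vbar (H + 1) s = 0)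
    (hVbarRec : ∀ h, 1 ≤ h → h ≤ H → ∀ s,
      Vbar h s = fmax (fun x =>
        P s x * (R s x + γ * ∑ s', T s x s' * Vbar (h + 1) s') +
        (1 - P s x) * (b + γ * fmax (Vbar (h + 1)))))
    (hVstarTop : ∀ s, Vstar (H + 1) s = 0)
    (hVstarRec : ∀ h, 1 ≤ h → h ≤ H → ∀ s,
      Vstar h s = fmax (fun x => R s x + γ * ∑ s', T s x s' * Vstar (h + 1) s')) :
    ∀ h, 1 ≤ h → h ≤ H + 1 → ∀ s, Vstar h s ≤ Vbar h s := by
  have key : ∀ d h, 1 ≤ h → h + d = H + 1 → ∀ s, Vstar h s ≤ Vbar h s := by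
    intro d
    induction d with
    | zero =>
      intro h h1 heq s
      simp only [Nat.add_zero] at heq
      subst heq
      rw [hVstarTop, hVbarTop]
    | succ d ih =>
      intro h h1 heq s
      have hH : h ≤ H := by omega
      have ih' : ∀ s, Vstar (h + 1) s ≤ Vbar (h + 1) s :=
        ih (h + 1) (by omega) (by omega)
      rw [hVstarRec h h1 hH s, hVbarRec h h1 hH s]
      apply Finset.sup'_le
      intro x _
      have hsum_le : (∑ s', T s x s' * Vstar (h + 1) s') ≤
          ∑ s', T s x s' * Vbar (h + 1) s' :=
        Finset.sum_le_sum fun s' _ =>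
          mul_le_mul_of_nonneg_left (ih' s') (hT0 s x s')
      have hmax : (∑ s', T s x s' * Vbar (h + 1) s') ≤ fmax (Vbar (h + 1)) := by
        calc (∑ s', T s x s' * Vbar (h + 1) s')
            ≤ ∑ s', T s x s' * fmax (Vbar (h + 1)) :=
              Finset.sum_le_sum fun s' _ =>
                mul_le_mul_of_nonneg_left
                  (Finset.le_sup' (f := Vbar (h + 1)) (Finset.mem_univ s'))
                  (hT0 s x s')
          _ = fmax (Vbar (h + 1)) := by rw [← Finset.sum_mul, hT1 s x, one_mul]
      have h1' : R s x + γ * ∑ s', T s x s' * Vstar (h + 1) s' ≤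
          R s x + γ * ∑ s', T s x s' * Vbar (h + 1) s' := by
        have := mul_le_mul_of_nonneg_left hsum_le hγ0
        linarith
      have h2' : R s x + γ * ∑ s', T s x s' * Vbar (h + 1) s' ≤
          b + γ * fmax (Vbar (h + 1)) := by
        have := mul_le_mul_of_nonneg_left hmax hγ0
        have := hR s x
        linarith
      have hconv : R s x + γ * ∑ s', T s x s' * Vbar (h + 1) s' ≤
          P s x * (R s x + γ * ∑ s', T s x s' * Vbar (h + 1) s') +
          (1 - P s x) * (b + γ * fmax (Vbar (h + 1))) := by
        nlinarith [hP0 s x, hP1 s x]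
      calc R s x + γ * ∑ s', T s x s' * Vstar (h + 1) s'
          ≤ P s x * (R s x + γ * ∑ s', T s x s' * Vbar (h + 1) s') +
            (1 - P s x) * (b + γ * fmax (Vbar (h + 1))) := le_trans h1' hconv
        _ ≤ _ := Finset.le_sup'
            (f := fun x => P s x * (R s x + γ * ∑ s', T s x s' * Vbar (h + 1) s') +
              (1 - P s x) * (b + γ * fmax (Vbar (h + 1)))) (Finset.mem_univ x)
  intro h h1 h2 s
  exact key (H + 1 - h) h h1 (by omega) s
end
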